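/- arXiv:2508.20716 — 2 statements merged into one kernel-verified Lean document; each statement's English description precedes it below -/
import Mathlib

section
/- Let n ≥ 5 and let G be a subgroup of the symmetric group Sₙ that acts (n-2)-transitively on {1,...,n}. Then G = Aₙ or G = Sₙ. -/
/-- A subgroup of the symmetric group is `m`-transitive if it maps any ordered tuple of
`m` distinct points to any other such tuple. -/
def IsMTransitive {n : ℕ} (G : Subgroup (Equiv.Perm (Fin n))) (m : ℕ) : Prop :=
  ∀ f g : Fin m ↪ Fin n, ∃ σ ∈ G, ∀ i : Fin m, σ (f i) = g i

/-- For n ≥ 5, an (n-2)-transitive subgroup of Sₙ is Aₙ or Sₙ. -/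
theorem n_sub_two_transitive_subgroup {n : ℕ} (hn : 5 ≤ n)
    (G : Subgroup (Equiv.Perm (Fin n))) (hG : IsMTransitive G (n - 2)) :
    G = alternatingGroup (Fin n) ∨ G = ⊤ := by
  -- the base embedding
  have hle : n - 2 ≤ n := Nat.sub_le _ _
  let f₀ : Fin (n - 2) ↪ Fin n := Fin.castLEEmb hle
  -- surjection from G onto embeddings
  have hsurj : Function.Surjective (fun σ : G => f₀.trans (σ : Equiv.Perm (Fin n)).toEmbedding) := by
    intro g
    obtain ⟨σ, hσG, hσ⟩ := hG f₀ g
    exact ⟨⟨σ, hσG⟩, Function.Embedding.ext fun i => hσ i⟩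
  have hcard_emb : Nat.card (Fin (n - 2) ↪ Fin n) = n.descFactorial (n - 2) := by
    simp [Nat.card_eq_fintype_card, Fintype.card_embedding_eq]
  have hfact : 2 * n.descFactorial (n - 2) = Nat.factorial n := by
    have := Nat.factorial_mul_descFactorial hle
    have h2 : n - (n - 2) = 2 := by omega
    rw [h2] at this
    simpa [Nat.factorial] using this
  have hGcard : n.descFactorial (n - 2) ≤ Nat.card G := by
    rw [← hcard_emb]
    exact Nat.card_le_card_of_surjective _ hsurj
  haveI : Nontrivial (Fin n) := Fin.nontrivial_iff_two_le.mpr (by omega)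
  have hperm : Nat.card (Equiv.Perm (Fin n)) = Nat.factorial n := by
    simp [Nat.card_eq_fintype_card, Fintype.card_perm]
  have hmul : G.index * Nat.card G = Nat.factorial n := by rw [Subgroup.index_mul_card, hperm]
  have hpos : 0 < n.descFactorial (n - 2) := by
    have h0 : n.descFactorial (n - 2) ≠ 0 := by
      rw [Ne, Nat.descFactorial_eq_zero_iff_lt]; omega
    omega
  have hindex : G.index ≤ 2 := by
    by_contra h
    have h3 : 3 ≤ G.index := by omega
    have : 3 * n.descFactorial (n - 2) ≤ Nat.factorial n := by
      calc 3 * n.descFactorial (n - 2) ≤ G.index * Nat.card G :=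
            Nat.mul_le_mul h3 hGcard
        _ = Nat.factorial n := hmul
    omega
  have hindex_pos : G.index ≠ 0 := by
    intro h0
    rw [h0, zero_mul] at hmul
    have := Nat.factorial_pos n
    omega
  have h12 : G.index = 1 ∨ G.index = 2 := by omega
  rcases h12 with h | h
  · exact Or.inr (Subgroup.index_eq_one.mp h)
  · left
    have hAle : alternatingGroup (Fin n) ≤ G := by
      rw [← Equiv.Perm.closure_three_cycles_eq_alternating]
      rw [Subgroup.closure_le]
      rintro σ hσ
      have h3 : orderOf σ = 3 := hσ.orderOf
      have : σ ^ 4 = σ := by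
        have : σ ^ 3 = 1 := by rw [← h3]; exact pow_orderOf_eq_one σ
        calc σ ^ 4 = σ ^ 3 * σ := by rw [pow_succ]
          _ = σ := by rw [this, one_mul]
      have hmem : (σ ^ 2) ^ 2 ∈ G := Subgroup.sq_mem_of_index_two h (σ ^ 2)
      rwa [← pow_mul, show 2 * 2 = 4 from rfl, this] at hmem
    refine (Subgroup.eq_of_le_of_card_ge hAle ?_).symm
    have hA : 2 * Fintype.card (alternatingGroup (Fin n)) = Fintype.card (Equiv.Perm (Fin n)) :=
      two_mul_card_alternatingGroup
    have hGc : 2 * Nat.card G = Nat.factorial n := by rw [← hmul, h]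
    have : 2 * Nat.card (alternatingGroup (Fin n)) = Nat.factorial n := by
      rw [Nat.card_eq_fintype_card, hA, ← hperm, Nat.card_eq_fintype_card]
    omega
end

section
/- In a non-trivial 2-(v,k,λ) design with b blocks, the number of blocks satisfies v ≤ b ≤ C(v,k). -/
/-- In a non-trivial 2-(v,k,λ) design, the number of blocks b satisfies
v ≤ b ≤ C(v,k). -/
theorem block_count_bounds {P : Type*} [Fintype P] [DecidableEq P]
    (B : Finset (Finset P)) (v k l : ℕ)
    (hv : Fintype.card P = v)
    (hkcard : ∀ Bl ∈ B, Bl.card = k)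
    (hl : ∀ x y : P, x ≠ y → (B.filter (fun Bl => x ∈ Bl ∧ y ∈ Bl)).card = l)
    (hlpos : 1 ≤ l)
    (hk2 : 2 < k) (hkv : k < v - 1) :
    v ≤ B.card ∧ B.card ≤ v.choose k := by
  classical
  constructor
  · -- Fisher's inequality
    set r : P → ℕ := fun p => (B.filter (fun Bl => p ∈ Bl)).card with hrdef
    -- double counting: r p * (k-1) = l * (v-1)
    have hr : ∀ p : P, r p * (k - 1) = l * (v - 1) := by
      intro p
      have h1 : r p * (k - 1) = ∑ Bl ∈ B.filter (fun Bl => p ∈ Bl), (Bl.card - 1) := by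
        rw [Finset.sum_congr rfl (fun Bl hBl => by
          rw [hkcard Bl (Finset.mem_filter.mp hBl).1]), Finset.sum_const, smul_eq_mul,
          hrdef]
      have h2 : ∀ Bl ∈ B.filter (fun Bl => p ∈ Bl), Bl.card - 1 = (Bl.erase p).card := by
        intro Bl hBl
        rw [Finset.card_erase_of_mem (Finset.mem_filter.mp hBl).2]
      rw [h1, Finset.sum_congr rfl h2]
      have h3 : ∑ Bl ∈ B.filter (fun Bl => p ∈ Bl), (Bl.erase p).card
          = ∑ y ∈ (Finset.univ : Finset P).erase p,
              (B.filter (fun Bl => p ∈ Bl ∧ y ∈ Bl)).card := by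
        simp only [Finset.card_eq_sum_ones]
        rw [Finset.sum_comm' (s := B.filter (fun Bl => p ∈ Bl))
          (t := fun Bl => Bl.erase p)
          (t' := (Finset.univ : Finset P).erase p)
          (s' := fun y => B.filter (fun Bl => p ∈ Bl ∧ y ∈ Bl))]
        intro Bl y
        simp only [Finset.mem_filter, Finset.mem_erase, Finset.mem_univ, and_true]
        tauto
      rw [h3, Finset.sum_congr rfl (fun y hy =>
        hl p y (fun h => (Finset.mem_erase.mp hy).1 h.symm)),
        Finset.sum_const, smul_eq_mul,
        Finset.card_erase_of_mem (Finset.mem_univ p), Finset.card_univ, hv]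
      exact Nat.mul_comm _ _
    have hk1 : 0 < k - 1 := by omega
    have hrl : ∀ p : P, l < r p := by
      intro p
      by_contra h
      push_neg at h
      have hre := hr p
      have hlt : l * (k - 1) < l * (v - 1) :=
        Nat.mul_lt_mul_of_pos_left (by omega) (by omega)
      have : r p * (k - 1) ≤ l * (k - 1) := Nat.mul_le_mul_right _ h
      omega
    -- incidence vectors
    set u : P → (↥B → ℚ) := fun p Bl => if p ∈ (Bl : Finset P) then 1 else 0 with hudef
    have hA : ∀ p q : P, (∑ Bl : ↥B, u p Bl * u q Bl)
        = ((B.filter (fun Bl => p ∈ Bl ∧ q ∈ Bl)).card : ℚ) := by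
      intro p q
      have e1 : (∑ Bl : ↥B, u p Bl * u q Bl)
          = ∑ Bl ∈ B, (if p ∈ Bl ∧ q ∈ Bl then (1:ℚ) else 0) := by
        rw [← Finset.sum_coe_sort B (fun Bl => if p ∈ Bl ∧ q ∈ Bl then (1:ℚ) else 0)]
        apply Finset.sum_congr rfl
        intro Bl _
        by_cases h1 : p ∈ (Bl : Finset P) <;> by_cases h2 : q ∈ (Bl : Finset P) <;>
          simp [hudef, h1, h2]
      rw [e1, Finset.sum_boole]
    have hli : LinearIndependent ℚ u := by
      rw [Fintype.linearIndependent_iff]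
      intro g hg p
      have hzero : ∀ Bl : ↥B, (∑ q, g q * u q Bl) = 0 := by
        intro Bl
        have := congrFun hg Bl
        simpa [Finset.sum_apply] using this
      have hS : (0:ℚ) = ∑ x : P, ∑ y : P, g x * g y * (∑ Bl : ↥B, u x Bl * u y Bl) :=
        calc (0:ℚ) = ∑ Bl : ↥B, (∑ q, g q * u q Bl) * (∑ q, g q * u q Bl) := by
              simp [hzero]
          _ = ∑ Bl : ↥B, ∑ x, ∑ y, g x * g y * (u x Bl * u y Bl) :=
              Finset.sum_congr rfl (fun Bl _ => by
                rw [Finset.sum_mul_sum]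
                exact Finset.sum_congr rfl (fun x _ =>
                  Finset.sum_congr rfl (fun y _ => by ring)))
          _ = ∑ x, ∑ Bl : ↥B, ∑ y, g x * g y * (u x Bl * u y Bl) := Finset.sum_comm
          _ = ∑ x, ∑ y, ∑ Bl : ↥B, g x * g y * (u x Bl * u y Bl) :=
              Finset.sum_congr rfl (fun x _ => Finset.sum_comm)
          _ = ∑ x, ∑ y, g x * g y * (∑ Bl : ↥B, u x Bl * u y Bl) :=
              Finset.sum_congr rfl (fun x _ => Finset.sum_congr rfl (fun y _ =>
                (Finset.mul_sum _ _ _).symm))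
      -- split
      have hsplit : ∀ x : P, (∑ y : P, g x * g y * (∑ Bl : ↥B, u x Bl * u y Bl))
          = g x * g x * ((r x : ℚ) - l) + ∑ y : P, g x * g y * l := by
        intro x
        have key : ∀ y : P, g x * g y * (∑ Bl : ↥B, u x Bl * u y Bl)
            = (if y = x then g x * g x * ((r x : ℚ) - l) else 0) + g x * g y * l := by
          intro y
          by_cases h : y = x
          · subst h
            have hfe : (B.filter (fun Bl => y ∈ Bl ∧ y ∈ Bl)) = B.filter (fun Bl => y ∈ Bl) := by
              apply Finset.filter_congr; intro Bl _; simp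
            rw [hA, hfe, if_pos rfl]
            have : ((B.filter (fun Bl => y ∈ Bl)).card : ℚ) = (r y : ℚ) := by
              rw [hrdef]
            rw [this]
            ring
          · rw [hA, hl x y (fun hxy => h (hxy ▸ rfl)), if_neg h]
            ring
        rw [Finset.sum_congr rfl (fun y _ => key y), Finset.sum_add_distrib,
          Finset.sum_ite_eq' Finset.univ x
            (fun y => g x * g x * ((r x : ℚ) - l)), if_pos (Finset.mem_univ x)]
      have hS2 : (0:ℚ) = (∑ x : P, g x * g x * ((r x : ℚ) - l))
          + l * (∑ x : P, g x) * (∑ x : P, g x) := by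
        rw [hS, Finset.sum_congr rfl (fun x _ => hsplit x), Finset.sum_add_distrib]
        congr 1
        rw [mul_assoc, Finset.sum_mul_sum, Finset.mul_sum]
        apply Finset.sum_congr rfl
        intro x _
        rw [Finset.mul_sum]
        apply Finset.sum_congr rfl
        intro y _
        ring
      have hnonneg : ∀ x : P, 0 ≤ g x * g x * ((r x : ℚ) - l) := by
        intro x
        apply mul_nonneg (mul_self_nonneg _)
        have h1 := hrl x
        have h2 : (l:ℚ) < (r x : ℚ) := by exact_mod_cast h1
        linarith
      have hterm : g p * g p * ((r p : ℚ) - l) = 0 := by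
        have h1 : (0:ℚ) ≤ l * (∑ x : P, g x) * (∑ x : P, g x) := by
          rw [mul_assoc]
          exact mul_nonneg (by positivity) (mul_self_nonneg _)
        have h2 : (∑ x : P, g x * g x * ((r x : ℚ) - l)) = 0 := by
          have hge : (0:ℚ) ≤ ∑ x : P, g x * g x * ((r x : ℚ) - l) :=
            Finset.sum_nonneg (fun x _ => hnonneg x)
          linarith [hS2]
        exact (Finset.sum_eq_zero_iff_of_nonneg (fun x _ => hnonneg x)).mp h2 p
          (Finset.mem_univ p)
      have hrp : (0:ℚ) < (r p : ℚ) - l := by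
        have h1 := hrl p
        have h2 : (l:ℚ) < (r p : ℚ) := by exact_mod_cast h1
        linarith
      have hgg : g p * g p = 0 := by
        rcases mul_eq_zero.mp hterm with h1 | h2
        · exact h1
        · linarith
      exact mul_self_eq_zero.mp hgg
    have hcard := hli.fintype_card_le_finrank
    rwa [Module.finrank_fintype_fun_eq_card, Fintype.card_coe, hv] at hcard
  · -- upper bound
    have hsub : B ⊆ (Finset.univ : Finset P).powersetCard k := by
      intro Bl hBl
      rw [Finset.mem_powersetCard]
      exact ⟨Finset.subset_univ _, hkcard Bl hBl⟩
    calc B.card ≤ ((Finset.univ : Finset P).powersetCard k).card := Finset.card_le_card hsub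
      _ = v.choose k := by rw [Finset.card_powersetCard, Finset.card_univ, hv]
end
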